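/- Let σ > 0 be real and ε ∈ {1, −1}. For every ζ in the cut plane D^ε, where D^1 := ℂ \ [1, ∞) and D^{−1} := ℂ \ (−∞, −1], the denominator 1 − ζ ε e^{−t} does not vanish for t > 0 and the integral defining f_σ^ε(ζ) := (ζ/Γ(σ)) ∫₀^∞ t^{σ−1} e^{−t} / (1 − ζ ε e^{−t}) dt converges absolutely; moreover the function ζ ↦ f_σ^ε(ζ) is complex-differentiable (analytic) on D^ε. -/

import Mathlib

/-! For `ζ` in the cut plane, `s ↦ 1 - ζεs` has no zero on `[0, 1]`, so by compactness
`|1 - ζεe^{-t}|` is bounded below by some `δ > 0` for all `t > 0`, locally uniformly in `ζ`.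
Both the integrand and its `ζ`-derivative `t^{σ-1}e^{-t} εe^{-t} / (1 - ζεe^{-t})²` are then
dominated by multiples of the Gamma integrand `t^{σ-1}e^{-t}`, and one differentiates under the
integral sign. -/

open MeasureTheory Real Set

noncomputable section

/-- The cut plane `D^ε`: for `ε = 1` this is `ℂ \ [1,∞)`, and for `ε = −1` it is
`ℂ \ (−∞,−1]`; both are described by the condition `εζ ∉ [1,∞)`. -/
def cutPlane (ε : ℂ) : Set ℂ := {ζ | ¬((ε * ζ).im = 0 ∧ 1 ≤ (ε * ζ).re)}

section ParametricIntegral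

variable {α : Type*} [MeasurableSpace α] {μ : Measure α} {a b : α → ℂ}

theorem hasDerivAt_div_one_sub_mul (a b ζ : ℂ) (h : 1 - ζ * b ≠ 0) :
    HasDerivAt (fun z => a / (1 - z * b)) (a * b / (1 - ζ * b) ^ 2) ζ := by
  have hden : HasDerivAt (fun z => 1 - z * b) (-b) ζ := by
    simpa using ((hasDerivAt_id ζ).mul_const b).const_sub 1
  exact ((hasDerivAt_const ζ a).fun_div hden h).congr_deriv (by ring)

theorem integrable_div_of_le_norm {d : α → ℂ} {δ : ℝ} (hδ : 0 < δ) (ha : Integrable a μ)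
    (hd : AEStronglyMeasurable d μ) (hδd : ∀ᵐ t ∂μ, δ ≤ ‖d t‖) :
    Integrable (fun t => a t / d t) μ := by
  refine ha.mul_bdd (c := δ⁻¹) hd.inv₀ (hδd.mono fun t ht => ?_)
  rw [norm_inv]
  exact inv_anti₀ hδ ht

theorem hasDerivAt_integral_div_one_sub_mul {C δ r : ℝ} {ζ₀ : ℂ} (hδ : 0 < δ) (hr : 0 < r)
    (ha : Integrable a μ) (hb : AEStronglyMeasurable b μ) (hbC : ∀ᵐ t ∂μ, ‖b t‖ ≤ C)
    (hδb : ∀ᵐ t ∂μ, ∀ ζ ∈ Metric.ball ζ₀ r, δ ≤ ‖1 - ζ * b t‖) :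
    HasDerivAt (fun ζ => ∫ t, a t / (1 - ζ * b t) ∂μ)
      (∫ t, a t * b t / (1 - ζ₀ * b t) ^ 2 ∂μ) ζ₀ := by
  have hden (ζ : ℂ) : AEStronglyMeasurable (fun t => 1 - ζ * b t) μ :=
    aestronglyMeasurable_const.sub (aestronglyMeasurable_const.mul hb)
  have hbound : ∀ᵐ t ∂μ, ∀ ζ ∈ Metric.ball ζ₀ r,
      ‖a t * b t / (1 - ζ * b t) ^ 2‖ ≤ ‖a t‖ * C / δ ^ 2 := by
    filter_upwards [hbC, hδb] with t htC htδ ζ hζ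
    rw [norm_div, norm_mul, norm_pow]
    gcongr
    · exact mul_nonneg (norm_nonneg _) ((norm_nonneg _).trans htC)
    · exact htδ ζ hζ
  have hdiff : ∀ᵐ t ∂μ, ∀ ζ ∈ Metric.ball ζ₀ r,
      HasDerivAt (fun z => a t / (1 - z * b t)) (a t * b t / (1 - ζ * b t) ^ 2) ζ := by
    filter_upwards [hδb] with t htδ ζ hζ
    exact hasDerivAt_div_one_sub_mul _ _ _ (norm_pos_iff.mp (hδ.trans_le (htδ ζ hζ)))
  exact (hasDerivAt_integral_of_dominated_loc_of_deriv_le (Metric.ball_mem_nhds ζ₀ hr)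
    (.of_forall fun ζ => ha.1.div₀ (hden ζ))
    (integrable_div_of_le_norm hδ ha (hden ζ₀)
      (hδb.mono fun t ht => ht ζ₀ (Metric.mem_ball_self hr)))
    ((ha.1.mul hb).div₀ ((hden ζ₀).pow 2)) hbound ((ha.norm.mul_const C).div_const _) hdiff).2

theorem differentiableOn_integral_div_one_sub_mul {C : ℝ} {U : Set ℂ} (hU : IsOpen U)
    (ha : Integrable a μ) (hb : AEStronglyMeasurable b μ) (hbC : ∀ᵐ t ∂μ, ‖b t‖ ≤ C)
    (hδb : ∀ K ⊆ U, IsCompact K → ∃ δ > 0, ∀ᵐ t ∂μ, ∀ ζ ∈ K, δ ≤ ‖1 - ζ * b t‖) :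
    DifferentiableOn ℂ (fun ζ => ∫ t, a t / (1 - ζ * b t) ∂μ) U := by
  intro ζ₀ hζ₀
  obtain ⟨r, hr, hrU⟩ := Metric.nhds_basis_closedBall.mem_iff.1 (hU.mem_nhds hζ₀)
  obtain ⟨δ, hδ, hδK⟩ := hδb _ hrU (isCompact_closedBall ζ₀ r)
  exact (hasDerivAt_integral_div_one_sub_mul hδ hr ha hb hbC
    (hδK.mono fun t ht ζ hζ => ht ζ (Metric.ball_subset_closedBall hζ))).differentiableAt
    |>.differentiableWithinAt

end ParametricIntegral

theorem isOpen_cutPlane (ε : ℂ) : IsOpen (cutPlane ε) := by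
  have hray : IsClosed {z : ℂ | z.im = 0 ∧ 1 ≤ z.re} :=
    (isClosed_eq Complex.continuous_im continuous_const).inter
      (isClosed_le continuous_const Complex.continuous_re)
  exact hray.isOpen_compl.preimage (continuous_const_mul ε)

theorem one_sub_mul_ofReal_ne_zero_of_mem_cutPlane {ε ζ : ℂ} (hζ : ζ ∈ cutPlane ε) {s : ℝ}
    (hs : s ∈ Icc 0 1) : 1 - ζ * ε * s ≠ 0 := by
  intro h
  obtain rfl | hs₀ := hs.1.eq_or_lt
  · simp at h
  have hεζ : ε * ζ = ((1 / s : ℝ) : ℂ) := by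
    push_cast
    rw [eq_div_iff (by exact_mod_cast hs₀.ne')]
    linear_combination -h
  refine hζ ⟨by rw [hεζ, Complex.ofReal_im], ?_⟩
  rw [hεζ, Complex.ofReal_re]
  exact one_le_one_div hs₀ hs.2

theorem IsCompact.exists_pos_le_norm_one_sub_mul_ofReal {ε : ℂ} {K : Set ℂ} (hK : IsCompact K)
    (hKε : K ⊆ cutPlane ε) : ∃ δ > 0, ∀ ζ ∈ K, ∀ s ∈ Icc (0 : ℝ) 1, δ ≤ ‖1 - ζ * ε * s‖ := by
  obtain rfl | hKne := K.eq_empty_or_nonempty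
  · exact ⟨1, one_pos, by simp⟩
  have hcont : Continuous fun p : ℂ × ℝ => ‖1 - p.1 * ε * p.2‖ := by fun_prop
  obtain ⟨⟨ζ₀, s₀⟩, ⟨hζ₀, hs₀⟩, hmin⟩ := (hK.prod isCompact_Icc).exists_isMinOn
    (hKne.prod (nonempty_Icc.2 zero_le_one)) hcont.continuousOn
  exact ⟨‖1 - ζ₀ * ε * s₀‖,
    norm_pos_iff.mpr (one_sub_mul_ofReal_ne_zero_of_mem_cutPlane (hKε hζ₀) hs₀),
    fun ζ hζ s hs => isMinOn_iff.mp hmin (ζ, s) (mk_mem_prod hζ hs)⟩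

theorem exp_neg_mem_Icc {t : ℝ} (ht : 0 ≤ t) : exp (-t) ∈ Icc (0 : ℝ) 1 :=
  ⟨(exp_pos _).le, exp_le_one_iff.2 (neg_nonpos.2 ht)⟩

theorem integrableOn_ofReal_rpow_mul_exp_neg {σ : ℝ} (hσ : 0 < σ) :
    IntegrableOn (fun t : ℝ => ((t ^ (σ - 1) * exp (-t) : ℝ) : ℂ)) (Ioi 0) :=
  ((GammaIntegral_convergent hσ).ofReal (𝕜 := ℂ)).congr
    (.of_forall fun _ => congrArg _ (mul_comm _ _))

theorem bose_fermi_function_analytic (σ : ℝ) (hσ : 0 < σ) (ε : ℂ) :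
    (∀ ζ ∈ cutPlane ε,
      (∀ t : ℝ, 0 < t → 1 - ζ * ε * ((Real.exp (-t) : ℝ) : ℂ) ≠ 0) ∧
      IntegrableOn
        (fun t : ℝ => ((t ^ (σ - 1) * Real.exp (-t) : ℝ) : ℂ) /
          (1 - ζ * ε * ((Real.exp (-t) : ℝ) : ℂ))) (Ioi 0)) ∧
    DifferentiableOn ℂ
      (fun ζ : ℂ => ζ / ((Real.Gamma σ : ℝ) : ℂ) *
        ∫ t in Ioi (0 : ℝ), ((t ^ (σ - 1) * Real.exp (-t) : ℝ) : ℂ) /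
          (1 - ζ * ε * ((Real.exp (-t) : ℝ) : ℂ)))
      (cutPlane ε) := by
  have hexp {t : ℝ} (ht : t ∈ Ioi 0) : exp (-t) ∈ Icc (0 : ℝ) 1 := exp_neg_mem_Icc (le_of_lt ht)
  have hg := integrableOn_ofReal_rpow_mul_exp_neg hσ
  have hb : AEStronglyMeasurable (fun t : ℝ => ε * ((Real.exp (-t) : ℝ) : ℂ))
      (volume.restrict (Ioi 0)) := by
    fun_prop
  have hbε : ∀ᵐ t ∂(volume.restrict (Ioi (0 : ℝ))), ‖ε * ((Real.exp (-t) : ℝ) : ℂ)‖ ≤ ‖ε‖ := by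
    filter_upwards [ae_restrict_mem measurableSet_Ioi] with t ht
    rw [norm_mul, Complex.norm_real, norm_of_nonneg (hexp ht).1]
    exact mul_le_of_le_one_right (norm_nonneg ε) (hexp ht).2
  have hδ : ∀ K ⊆ cutPlane ε, IsCompact K → ∃ δ > 0, ∀ᵐ t ∂(volume.restrict (Ioi (0 : ℝ))),
      ∀ ζ ∈ K, δ ≤ ‖1 - ζ * (ε * ((Real.exp (-t) : ℝ) : ℂ))‖ := by
    intro K hKε hK
    obtain ⟨δ, hδ, hδK⟩ := hK.exists_pos_le_norm_one_sub_mul_ofReal hKε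
    refine ⟨δ, hδ, ?_⟩
    filter_upwards [ae_restrict_mem measurableSet_Ioi] with t ht ζ hζ
    rw [← mul_assoc]
    exact hδK ζ hζ _ (hexp ht)
  refine ⟨fun ζ hζ => ⟨fun t ht => one_sub_mul_ofReal_ne_zero_of_mem_cutPlane hζ (hexp ht), ?_⟩,
    ?_⟩
  · obtain ⟨δ, hδ, hδζ⟩ := hδ {ζ} (singleton_subset_iff.2 hζ) isCompact_singleton
    simp_rw [mul_assoc]
    exact integrable_div_of_le_norm hδ hg (aestronglyMeasurable_const.sub
      (aestronglyMeasurable_const.mul hb)) (hδζ.mono fun t ht => ht ζ rfl)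
  · simp_rw [mul_assoc]
    exact (differentiableOn_id.div_const _).mul
      (differentiableOn_integral_div_one_sub_mul (isOpen_cutPlane ε) hg hb hbε hδ)
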